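/- Let G be a connected α-critical graph with at least 4 vertices, and let u be a vertex of G with exactly two neighbors v and w. Then v and w are not adjacent. -/

import Mathlib

open SimpleGraph

variable {V : Type*}

/-- The maximum size of an independent (stable) set of a simple graph. -/
noncomputable def alpha (G : SimpleGraph V) : ℕ :=
  sSup {n | ∃ s : Finset V, (∀ x ∈ s, ∀ y ∈ s, ¬ G.Adj x y) ∧ s.card = n}

/-- A graph is α-critical if deleting any edge increases α. -/
def AlphaCritical (G : SimpleGraph V) : Prop :=
  ∀ x y : V, G.Adj x y → alpha G < alpha (G.deleteEdges {s(x, y)})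

/-- `G` contains a totally odd K₄-subdivision: four distinct branch vertices joined by
six internally disjoint paths of odd length. -/
def HasTOK4 (G : SimpleGraph V) : Prop :=
  ∃ b : Fin 4 → V, Function.Injective b ∧
  ∃ P : ∀ i j : Fin 4, G.Walk (b i) (b j),
    (∀ i j, i ≠ j → (P i j).IsPath) ∧
    (∀ i j, i ≠ j → Odd (P i j).length) ∧
    (∀ i j k l : Fin 4, i ≠ j → k ≠ l → s(i, j) ≠ s(k, l) →
      ∀ v : V, v ∈ (P i j).support → v ∈ (P k l).support →
        (v = b i ∨ v = b j) ∧ (v = b k ∨ v = b l))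

/-- `G` is (isomorphic to) a totally odd K₄-subdivision: it has one that uses all
vertices and all edges of `G`. -/
def IsTOK4 (G : SimpleGraph V) : Prop :=
  ∃ b : Fin 4 → V, Function.Injective b ∧
  ∃ P : ∀ i j : Fin 4, G.Walk (b i) (b j),
    (∀ i j, i ≠ j → (P i j).IsPath) ∧
    (∀ i j, i ≠ j → Odd (P i j).length) ∧
    (∀ i j k l : Fin 4, i ≠ j → k ≠ l → s(i, j) ≠ s(k, l) →
      ∀ v : V, v ∈ (P i j).support → v ∈ (P k l).support →
        (v = b i ∨ v = b j) ∧ (v = b k ∨ v = b l)) ∧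
    (∀ v : V, ∃ i j, i ≠ j ∧ v ∈ (P i j).support) ∧
    (∀ e ∈ G.edgeSet, ∃ i j, i ≠ j ∧ e ∈ (P i j).edges)

/-- `G` is an odd cycle: a cycle of odd length passing through all vertices
and using all edges of `G`. -/
def IsOddCycle (G : SimpleGraph V) : Prop :=
  ∃ (v : V) (w : G.Walk v v), w.IsCycle ∧ Odd w.length ∧
    (∀ u : V, u ∈ w.support) ∧ (∀ e ∈ G.edgeSet, e ∈ w.edges)

/-- `G` is isomorphic to the complete graph on one vertex. -/
def IsK1 (G : SimpleGraph V) : Prop := Nonempty (G ≃g (⊤ : SimpleGraph (Fin 1)))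

/-- `G` is isomorphic to the complete graph on two vertices. -/
def IsK2 (G : SimpleGraph V) : Prop := Nonempty (G ≃g (⊤ : SimpleGraph (Fin 2)))

/-
If `u` has degree two and its neighbours `v`, `w` are adjacent, take any edge `vx` with
`x ∉ {u, w}`. Criticality of `vx` gives an independent set of `G - vx` of size `α(G) + 1`
containing `v` and `x`; it avoids `N[u] \ {v}`, so replacing `v` by `u` yields an independent
set of `G` of the same size, which is impossible. Hence `v` and `w` have no neighbours outside
`{u, v, w}`, so the triangle is a whole component, contradicting connectedness and `|V| ≥ 4`.
-/

open Finset

namespace SimpleGraph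

variable {G : SimpleGraph V}

theorem isIndepSet_iff_forall_not_adj {s : Set V} :
    G.IsIndepSet s ↔ ∀ x ∈ s, ∀ y ∈ s, ¬ G.Adj x y :=
  ⟨fun h _ hx _ hy hxy => h hx hy hxy.ne hxy, fun h x hx y hy _ => h x hx y hy⟩

theorem alpha_eq_indepNum (G : SimpleGraph V) : alpha G = G.indepNum := by
  simp only [alpha, indepNum, isNIndepSet_iff, isIndepSet_iff_forall_not_adj, Finset.mem_coe]

theorem IsIndepSet.of_deleteEdges_of_notMem {s : Set V} {v x : V}
    (hs : (G.deleteEdges {s(v, x)}).IsIndepSet s) (hv : v ∉ s) : G.IsIndepSet s :=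
  fun a ha b hb hab hadj => hs ha hb hab <| deleteEdges_adj.2
    ⟨hadj, fun he => hv <| by rcases Sym2.eq_iff.1 he with ⟨rfl, -⟩ | ⟨-, rfl⟩ <;> assumption⟩

/-- In closed neighbourhoods: `N[u] ⊆ N[v]` forces `N[v] ⊆ N[u]`. -/
theorem AlphaCritical.neighborSet_subset_of_neighborSet_subset [Finite V]
    (hG : AlphaCritical G) {u v : V} (huv : G.Adj u v)
    (h : G.neighborSet u ⊆ insert v (G.neighborSet v)) :
    G.neighborSet v ⊆ insert u (G.neighborSet u) := by
  classical
  intro x hvx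
  by_contra hx
  simp only [Set.mem_insert_iff, mem_neighborSet, not_or] at hx
  obtain ⟨hxu, hux⟩ := hx
  set H := G.deleteEdges {s(v, x)}
  obtain ⟨S, hS, hScard⟩ := H.exists_isNIndepSet_indepNum
  have hlt : G.indepNum < #S := by
    simpa only [hScard, ← alpha_eq_indepNum] using hG v x hvx
  have hvS : v ∈ S := by
    by_contra hvS
    exact hlt.not_ge (hS.of_deleteEdges_of_notMem hvS).card_le_indepNum
  have hvS_adj : ∀ b ∈ S, G.Adj v b → b = x := fun b hb hvb => by
    by_contra hbx
    refine hS (Finset.mem_coe.2 hvS) hb hvb.ne (deleteEdges_adj.2 ⟨hvb, ?_⟩)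
    rintro (he : s(v, b) = s(v, x))
    exact hbx (Sym2.congr_right.1 he)
  have huS : u ∉ S := fun huS => hxu (hvS_adj u huS huv.symm).symm
  have hT : G.IsIndepSet ↑(insert u (S.erase v)) := by
    rw [Finset.coe_insert, isIndepSet_iff, Set.pairwise_insert]
    have hSv : H.IsIndepSet ↑(S.erase v) := hS.mono (Finset.coe_subset.2 (S.erase_subset v))
    refine ⟨hSv.of_deleteEdges_of_notMem (by simp), fun b hb _ => ?_⟩
    obtain ⟨hbv, hbS⟩ := Finset.mem_erase.1 hb
    have hub : ¬ G.Adj u b := fun hub => by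
      rcases h hub with rfl | hvb
      · exact hbv rfl
      · exact hux (hvS_adj b hbS hvb ▸ hub)
    exact ⟨hub, fun hbu => hub hbu.symm⟩
  have hTcard : #(insert u (S.erase v)) = #S := by
    rw [Finset.card_insert_of_notMem (fun h => huS (Finset.mem_of_mem_erase h)),
      Finset.card_erase_add_one hvS]
  exact hlt.not_ge (hTcard ▸ hT.card_le_indepNum)

theorem AlphaCritical.neighborSet_subset_of_neighborSet_eq_pair [Finite V]
    (hG : AlphaCritical G) {u v w : V} (hN : G.neighborSet u = {v, w}) (hvw : G.Adj v w) :
    G.neighborSet v ⊆ {u, v, w} := by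
  have huv : G.Adj u v := by simp [← mem_neighborSet, hN]
  refine hN ▸ hG.neighborSet_subset_of_neighborSet_subset huv ?_
  simp [hN, Set.insert_subset_iff, hvw]

theorem Preconnected.eq_univ_of_forall_neighborSet_subset (hG : G.Preconnected) {s : Set V}
    (hs : s.Nonempty) (h : ∀ a ∈ s, G.neighborSet a ⊆ s) : s = Set.univ := by
  refine Set.eq_univ_of_forall fun y => by_contra fun hy => ?_
  obtain ⟨a, ha⟩ := hs
  obtain ⟨d, -, hd, hd'⟩ := (hG a y).some.exists_boundary_dart s ha hy
  exact hd' (h _ hd d.adj)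

end SimpleGraph

theorem stmt_2_general {V : Type*} [Fintype V] (G : SimpleGraph V) (hconn : G.Connected)
    (hG : AlphaCritical G) (hcard : 4 ≤ Fintype.card V) (u v w : V)
    (hN : G.neighborSet u = {v, w}) : ¬ G.Adj v w := by
  classical
  intro hvw
  have hv : G.neighborSet v ⊆ {u, v, w} := hG.neighborSet_subset_of_neighborSet_eq_pair hN hvw
  have hw : G.neighborSet w ⊆ {u, v, w} := by
    rw [Set.pair_comm v w]
    exact hG.neighborSet_subset_of_neighborSet_eq_pair (hN.trans (Set.pair_comm v w)) hvw.symm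
  have huniv : ({u, v, w} : Set V) = Set.univ :=
    hconn.preconnected.eq_univ_of_forall_neighborSet_subset ⟨u, by simp⟩ <| by
      rintro a (rfl | rfl | rfl)
      · simp [hN]
      · exact hv
      · exact hw
  have : Fintype.card V ≤ 3 := calc
    Fintype.card V = #(univ : Finset V) := card_univ.symm
    _ ≤ #{u, v, w} := card_le_card fun z _ => by
      have hz : z ∈ ({u, v, w} : Set V) := huniv ▸ Set.mem_univ z
      simpa using hz
    _ ≤ 3 := card_le_three
  omega

theorem stmt_2 {V : Type*} [Fintype V] (G : SimpleGraph V) (hconn : G.Connected)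
    (hG : AlphaCritical G) (hcard : 4 ≤ Fintype.card V) (u v w : V) (hvw : v ≠ w)
    (hN : G.neighborSet u = {v, w}) : ¬ G.Adj v w :=
  stmt_2_general G hconn hG hcard u v w hN
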